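/- With B_X and E_X as above, E_X has Watatani index 2: if z_i, y_i ∈ X satisfy Σ ⟨z_i, y_i⟩_A = 1 and w_i = z_i^♯, then {(1,1)} ∪ {([[0, w_i],[(w_i^♯)~, 0]], [[0, y_i],[(y_i^♯)~, 0]])} is a quasi-basis for E_X and Index E_X = 2·1. -/

import Mathlib

noncomputable section

/-- An A-A-equivalence bimodule (imprimitivity bimodule) structure on `X`. -/
structure EqvBimod (A : Type*) [NormedRing A] [StarRing A] [NormedAlgebra ℂ A]
    (X : Type*) [NormedAddCommGroup X] [NormedSpace ℂ X] [CompleteSpace X] where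
  ls : A → X →ₗ[ℂ] X          -- left action  a · x
  rs : A → X →ₗ[ℂ] X          -- right action x · a
  ls_one : ∀ x, ls 1 x = x
  ls_mul : ∀ a b x, ls (a * b) x = ls a (ls b x)
  ls_add : ∀ a b x, ls (a + b) x = ls a x + ls b x
  rs_one : ∀ x, rs 1 x = x
  rs_mul : ∀ a b x, rs (a * b) x = rs b (rs a x)
  rs_add : ∀ a b x, rs (a + b) x = rs a x + rs b x
  ls_rs : ∀ a b x, ls a (rs b x) = rs b (ls a x)
  linn : X → X → A            -- left inner product  _A⟨x, y⟩
  rinn : X → X → A            -- right inner product ⟨x, y⟩_A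
  linn_add_left : ∀ x y z, linn (x + y) z = linn x z + linn y z
  linn_smul_left : ∀ (c : ℂ) x y, linn (c • x) y = c • linn x y
  linn_star : ∀ x y, star (linn x y) = linn y x
  linn_ls : ∀ a x y, linn (ls a x) y = a * linn x y
  rinn_add_right : ∀ x y z, rinn x (y + z) = rinn x y + rinn x z
  rinn_smul_right : ∀ (c : ℂ) x y, rinn x (c • y) = c • rinn x y
  rinn_star : ∀ x y, star (rinn x y) = rinn y x
  rinn_rs : ∀ a x y, rinn x (rs a y) = rinn x y * a
  compat : ∀ x y z, ls (linn x y) z = rs (rinn y z) x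
  lpos : ∀ x, ∃ a, linn x x = star a * a
  rpos : ∀ x, ∃ a, rinn x x = star a * a
  lfull : (Submodule.span ℂ {a : A | ∃ x y, a = linn x y}).topologicalClosure = ⊤
  rfull : (Submodule.span ℂ {a : A | ∃ x y, a = rinn x y}).topologicalClosure = ⊤
  norm_inn : ∀ x, ‖x‖ ^ 2 = ‖rinn x x‖

/-- An involutive A-A-equivalence bimodule: an equivalence bimodule together with a
conjugate-linear involution `x ↦ x^♯` satisfying `(x^♯)^♯ = x`,
`(a·x·b)^♯ = b*·x^♯·a*`, and `_A⟨x, y^♯⟩ = ⟨x^♯, y⟩_A`. -/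
structure InvBimod (A : Type*) [NormedRing A] [StarRing A] [NormedAlgebra ℂ A]
    (X : Type*) [NormedAddCommGroup X] [NormedSpace ℂ X] [CompleteSpace X]
    extends EqvBimod A X where
  sh : X → X
  sh_add : ∀ x y, sh (x + y) = sh x + sh y
  sh_smul : ∀ (c : ℂ) x, sh (c • x) = star c • sh x
  sh_sh : ∀ x, sh (sh x) = x
  sh_ls : ∀ a x, sh (ls a x) = rs (star a) (sh x)
  sh_rs : ∀ a x, sh (rs a x) = ls (star a) (sh x)
  sh_inn : ∀ x y, linn x (sh y) = rinn (sh x) y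

/-! Write the elements of `B_X` as `D a + J x` with `D a = [[a, 0], [0, a]]` and
`J x = [[0, x], [(x^♯)~, 0]]`. The matrix relations of the linking algebra give
`D a * J s = J (a·s)`, `J s * D a = J (s·a)` and `J s * J t = D ⟨s^♯, t⟩_A`. Hence
`E_X ((D a + J x) W_i) Y_i = J (_A⟨x, z_i⟩·y_i)`, and by the compatibility
`_A⟨x, z⟩·y = x·⟨z, y⟩_A` these sum to `J (x·Σ⟨z_i, y_i⟩_A) = J x`; the left expansion is
symmetric, and `Σ W_i Y_i = D (Σ⟨z_i, y_i⟩_A) = 1`. -/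

section LinkingDiag

variable {A L : Type*} [AddCommMonoid A] [Module ℂ A] [AddCommMonoid L] [Module ℂ L]

/-- The matrix `[[a, 0], [0, a]]`. -/
def linkingDiag (ι₁ ι₂ : A →ₗ[ℂ] L) (a : A) : L := ι₁ a + ι₂ a

theorem linkingDiag_sum (ι₁ ι₂ : A →ₗ[ℂ] L) {ι : Type*} (s : Finset ι) (f : ι → A) :
    ∑ i ∈ s, linkingDiag ι₁ ι₂ (f i) = linkingDiag ι₁ ι₂ (∑ i ∈ s, f i) := by
  simp only [linkingDiag, map_sum, Finset.sum_add_distrib]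

end LinkingDiag

section LinkingAlgebra

variable {A X : Type*} [NormedRing A] [StarRing A] [NormedAlgebra ℂ A]
  [NormedAddCommGroup X] [NormedSpace ℂ X] [CompleteSpace X]

namespace EqvBimod

variable (M : EqvBimod A X)

theorem ls_sum {ι : Type*} (s : Finset ι) (f : ι → A) (x : X) :
    M.ls (∑ i ∈ s, f i) x = ∑ i ∈ s, M.ls (f i) x :=
  map_sum (AddMonoidHom.mk' (fun a => M.ls a x) fun a b => M.ls_add a b x) f s

theorem rs_sum {ι : Type*} (s : Finset ι) (f : ι → A) (x : X) :
    M.rs (∑ i ∈ s, f i) x = ∑ i ∈ s, M.rs (f i) x :=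
  map_sum (AddMonoidHom.mk' (fun a => M.rs a x) fun a b => M.rs_add a b x) f s

theorem sum_ls_linn_eq_self {ι : Type*} [Fintype ι] {z y : ι → X}
    (hzy : ∑ i, M.rinn (z i) (y i) = 1) (x : X) :
    ∑ i, M.ls (M.linn x (z i)) (y i) = x := by
  simp only [M.compat, ← M.rs_sum, hzy, M.rs_one]

end EqvBimod

namespace InvBimod

variable (M : InvBimod A X)

theorem sh_sum {ι : Type*} (s : Finset ι) (f : ι → X) :
    M.sh (∑ i ∈ s, f i) = ∑ i ∈ s, M.sh (f i) :=
  map_sum (AddMonoidHom.mk' M.sh M.sh_add) f s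

theorem linn_sh_sh (x y : X) : M.linn (M.sh x) (M.sh y) = M.rinn x y := by
  rw [M.sh_inn, M.sh_sh]

theorem rinn_sh_sh (x y : X) : M.rinn (M.sh x) (M.sh y) = M.linn x y := by
  rw [← M.sh_inn, M.sh_sh]

theorem sum_rs_rinn_sh_eq_self {ι : Type*} [Fintype ι] {z y : ι → X}
    (hzy : ∑ i, M.rinn (z i) (y i) = 1) (x : X) :
    ∑ i, M.rs (M.rinn (M.sh (y i)) x) (M.sh (z i)) = x := by
  simp only [← M.compat, M.linn_sh_sh, ← M.ls_sum, hzy, M.ls_one]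

end InvBimod

variable {L : Type*} [Ring L] [StarRing L] [Module ℂ L]

/-- Relations of the corner embeddings `ι₁ a = [[a, 0], [0, 0]]`, `ι₂ a = [[0, 0], [0, a]]`,
`j x = [[0, x], [0, 0]]` into the linking algebra `L = [[A, X], [X~, A]]`. -/
structure LinkingRelations (M : InvBimod A X) (ι₁ ι₂ : A →ₗ[ℂ] L) (j : X →ₗ[ℂ] L) : Prop where
  star_ι₁ : ∀ a, star (ι₁ a) = ι₁ (star a)
  star_ι₂ : ∀ a, star (ι₂ a) = ι₂ (star a)
  j_ls : ∀ a x, j (M.ls a x) = ι₁ a * j x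
  j_rs : ∀ a x, j (M.rs a x) = j x * ι₂ a
  j_mul_star_j : ∀ x y, j x * star (j y) = ι₁ (M.linn x y)
  star_j_mul_j : ∀ x y, star (j x) * j y = ι₂ (M.rinn x y)
  j_mul_j : ∀ x y, j x * j y = 0
  ι₂_mul_j : ∀ a x, ι₂ a * j x = 0
  j_mul_ι₁ : ∀ a x, j x * ι₁ a = 0

/-- The matrix `[[0, x], [(x^♯)~, 0]]`; `B_X` consists of the sums
`linkingDiag a + linkingOffDiag x`. -/
def InvBimod.linkingOffDiag (M : InvBimod A X) (j : X →ₗ[ℂ] L) (x : X) : L :=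
  j x + star (j (M.sh x))

theorem InvBimod.linkingOffDiag_sum (M : InvBimod A X) (j : X →ₗ[ℂ] L) {ι : Type*}
    (s : Finset ι) (f : ι → X) :
    ∑ i ∈ s, M.linkingOffDiag j (f i) = M.linkingOffDiag j (∑ i ∈ s, f i) := by
  simp only [InvBimod.linkingOffDiag, M.sh_sum, map_sum, star_sum, Finset.sum_add_distrib]

namespace LinkingRelations

variable {M : InvBimod A X} {ι₁ ι₂ : A →ₗ[ℂ] L} {j : X →ₗ[ℂ] L}

theorem ι₁_mul_star_j (h : LinkingRelations M ι₁ ι₂ j) (a : A) (x : X) :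
    ι₁ a * star (j x) = 0 := by
  rw [← star_star (ι₁ a), ← star_mul, h.star_ι₁, h.j_mul_ι₁, star_zero]

theorem ι₂_mul_star_j (h : LinkingRelations M ι₁ ι₂ j) (a : A) (x : X) :
    ι₂ a * star (j x) = star (j (M.rs (star a) x)) := by
  rw [← star_star (ι₂ a), ← star_mul, h.star_ι₂, h.j_rs]

theorem star_j_mul_ι₁ (h : LinkingRelations M ι₁ ι₂ j) (a : A) (x : X) :
    star (j x) * ι₁ a = star (j (M.ls (star a) x)) := by
  rw [← star_star (ι₁ a), ← star_mul, h.star_ι₁, h.j_ls]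

theorem star_j_mul_ι₂ (h : LinkingRelations M ι₁ ι₂ j) (a : A) (x : X) :
    star (j x) * ι₂ a = 0 := by
  rw [← star_star (ι₂ a), ← star_mul, h.star_ι₂, h.ι₂_mul_j, star_zero]

theorem star_j_mul_star_j (h : LinkingRelations M ι₁ ι₂ j) (x y : X) :
    star (j x) * star (j y) = 0 := by
  rw [← star_mul, h.j_mul_j, star_zero]

theorem diag_mul_offDiag (h : LinkingRelations M ι₁ ι₂ j) (a : A) (x : X) :
    linkingDiag ι₁ ι₂ a * M.linkingOffDiag j x = M.linkingOffDiag j (M.ls a x) := by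
  simp only [linkingDiag, InvBimod.linkingOffDiag, add_mul, mul_add, h.j_ls, h.ι₁_mul_star_j,
    h.ι₂_mul_j, h.ι₂_mul_star_j, M.sh_ls, add_zero, zero_add]

theorem offDiag_mul_diag (h : LinkingRelations M ι₁ ι₂ j) (a : A) (x : X) :
    M.linkingOffDiag j x * linkingDiag ι₁ ι₂ a = M.linkingOffDiag j (M.rs a x) := by
  simp only [linkingDiag, InvBimod.linkingOffDiag, add_mul, mul_add, h.j_rs, h.j_mul_ι₁,
    h.star_j_mul_ι₁, h.star_j_mul_ι₂, M.sh_rs, add_zero, zero_add]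
  exact add_comm _ _

theorem offDiag_mul_offDiag (h : LinkingRelations M ι₁ ι₂ j) (x y : X) :
    M.linkingOffDiag j x * M.linkingOffDiag j y = linkingDiag ι₁ ι₂ (M.rinn (M.sh x) y) := by
  simp only [linkingDiag, InvBimod.linkingOffDiag, add_mul, mul_add, h.j_mul_j,
    h.j_mul_star_j, h.star_j_mul_j, h.star_j_mul_star_j, M.sh_inn, add_zero, zero_add]
  exact add_comm _ _

end LinkingRelations

section Expectation

variable {M : InvBimod A X} {ι₁ ι₂ : A →ₗ[ℂ] L} {j : X →ₗ[ℂ] L} {E : L → L}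
  {ι : Type*} [Fintype ι] {z y : ι → X}

theorem LinkingRelations.sum_expectation_mul_offDiag (h : LinkingRelations M ι₁ ι₂ j)
    (hE : ∀ a x, E (linkingDiag ι₁ ι₂ a + M.linkingOffDiag j x) = linkingDiag ι₁ ι₂ a)
    (hzy : ∑ i, M.rinn (z i) (y i) = 1) (a : A) (x : X) :
    ∑ i, E ((linkingDiag ι₁ ι₂ a + M.linkingOffDiag j x) * M.linkingOffDiag j (M.sh (z i))) *
      M.linkingOffDiag j (y i) = M.linkingOffDiag j x := by
  have hcoeff : ∀ i, E ((linkingDiag ι₁ ι₂ a + M.linkingOffDiag j x) *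
      M.linkingOffDiag j (M.sh (z i))) = linkingDiag ι₁ ι₂ (M.linn x (z i)) := by
    intro i
    rw [add_mul, h.diag_mul_offDiag, h.offDiag_mul_offDiag, M.rinn_sh_sh, add_comm, hE]
  simp only [hcoeff, h.diag_mul_offDiag, InvBimod.linkingOffDiag_sum, M.sum_ls_linn_eq_self hzy]

theorem LinkingRelations.sum_offDiag_mul_expectation (h : LinkingRelations M ι₁ ι₂ j)
    (hE : ∀ a x, E (linkingDiag ι₁ ι₂ a + M.linkingOffDiag j x) = linkingDiag ι₁ ι₂ a)
    (hzy : ∑ i, M.rinn (z i) (y i) = 1) (a : A) (x : X) :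
    ∑ i, M.linkingOffDiag j (M.sh (z i)) *
      E (M.linkingOffDiag j (y i) * (linkingDiag ι₁ ι₂ a + M.linkingOffDiag j x)) =
      M.linkingOffDiag j x := by
  have hcoeff : ∀ i, E (M.linkingOffDiag j (y i) * (linkingDiag ι₁ ι₂ a + M.linkingOffDiag j x)) =
      linkingDiag ι₁ ι₂ (M.rinn (M.sh (y i)) x) := by
    intro i
    rw [mul_add, h.offDiag_mul_diag, h.offDiag_mul_offDiag, add_comm, hE]
  simp only [hcoeff, h.offDiag_mul_diag, InvBimod.linkingOffDiag_sum, M.sum_rs_rinn_sh_eq_self hzy]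

theorem LinkingRelations.sum_offDiag_mul_offDiag (h : LinkingRelations M ι₁ ι₂ j)
    (hone : ι₁ 1 + ι₂ 1 = 1) (hzy : ∑ i, M.rinn (z i) (y i) = 1) :
    ∑ i, M.linkingOffDiag j (M.sh (z i)) * M.linkingOffDiag j (y i) = 1 := by
  simp only [h.offDiag_mul_offDiag, M.sh_sh, linkingDiag_sum, hzy]
  exact hone

end Expectation

end LinkingAlgebra

theorem linking_expectation_index_two_general
    {A X L : Type*} [NormedRing A] [StarRing A] [NormedAlgebra ℂ A]
    [NormedAddCommGroup X] [NormedSpace ℂ X] [CompleteSpace X]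
    [NormedRing L] [StarRing L] [NormedAlgebra ℂ L]
    (M : InvBimod A X)
    -- the linking algebra L of X: corner embeddings ι₁, ι₂ of A and j of X
    (ι₁ ι₂ : A →ₗ[ℂ] L) (j : X →ₗ[ℂ] L)
    (hι₁s : ∀ a, star (ι₁ a) = ι₁ (star a))
    (hι₂s : ∀ a, star (ι₂ a) = ι₂ (star a))
    (hone : ι₁ 1 + ι₂ 1 = 1)
    (hjl : ∀ a x, j (M.ls a x) = ι₁ a * j x)
    (hjr : ∀ a x, j (M.rs a x) = j x * ι₂ a)
    (hjj : ∀ x y, j x * star (j y) = ι₁ (M.linn x y))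
    (hjj' : ∀ x y, star (j x) * j y = ι₂ (M.rinn x y))
    (hjz : ∀ x y, j x * j y = 0)
    (hj12 : ∀ a x, ι₂ a * j x = 0)
    (hj21 : ∀ a x, j x * ι₁ a = 0)
    -- the conditional expectation E_X
    (EX : L →ₗ[ℂ] L)
    (hEX : ∀ a x, EX (ι₁ a + ι₂ a + j x + star (j (M.sh x))) = ι₁ a + ι₂ a)
    -- elements with Σ ⟨z_i, y_i⟩_A = 1, and w_i = z_i^♯
    {n : ℕ} (z y : Fin n → X) (hzy : ∑ i, M.rinn (z i) (y i) = 1)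
    (w : Fin n → X) (hw : ∀ i, w i = M.sh (z i))
    (W Y : Fin n → L)
    (hWdef : ∀ i, W i = j (w i) + star (j (M.sh (w i))))
    (hYdef : ∀ i, Y i = j (y i) + star (j (M.sh (y i)))) :
    -- quasi-basis property for E_X on B_X
    (∀ a x, (ι₁ a + ι₂ a + j x + star (j (M.sh x))) =
      EX (ι₁ a + ι₂ a + j x + star (j (M.sh x))) * 1 +
      ∑ i, EX ((ι₁ a + ι₂ a + j x + star (j (M.sh x))) * W i) * Y i) ∧
    (∀ a x, (ι₁ a + ι₂ a + j x + star (j (M.sh x))) =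
      1 * EX (ι₁ a + ι₂ a + j x + star (j (M.sh x))) +
      ∑ i, W i * EX (Y i * (ι₁ a + ι₂ a + j x + star (j (M.sh x))))) ∧
    -- Index E_X = 2
    (1 : L) * 1 + ∑ i, W i * Y i = 2 := by
  have h : LinkingRelations M ι₁ ι₂ j := ⟨hι₁s, hι₂s, hjl, hjr, hjj, hjj', hjz, hj12, hj21⟩
  have hB : ∀ a x, ι₁ a + ι₂ a + j x + star (j (M.sh x)) =
      linkingDiag ι₁ ι₂ a + M.linkingOffDiag j x := fun _ _ => add_assoc _ _ _
  have hE : ∀ a x, EX (linkingDiag ι₁ ι₂ a + M.linkingOffDiag j x) = linkingDiag ι₁ ι₂ a :=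
    fun a x => hB a x ▸ hEX a x
  have hW : ∀ i, W i = M.linkingOffDiag j (M.sh (z i)) := fun i => hw i ▸ hWdef i
  have hY : ∀ i, Y i = M.linkingOffDiag j (y i) := hYdef
  simp only [hB, hE, hW, hY]
  refine ⟨fun a x => ?_, fun a x => ?_, ?_⟩
  · rw [h.sum_expectation_mul_offDiag hE hzy, mul_one]
  · rw [h.sum_offDiag_mul_expectation hE hzy, one_mul]
  · rw [h.sum_offDiag_mul_offDiag hone hzy, one_mul, one_add_one_eq_two]

/-- the conditional expectation `E_X : B_X → A` has Watatani index 2: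
if `Σ ⟨z_i, y_i⟩_A = 1` and `w_i = z_i^♯`, then
`{(1,1)} ∪ {(W_i, Y_i)}` with `W_i = [[0,w_i],[(w_i^♯)~,0]]`, `Y_i = [[0,y_i],[(y_i^♯)~,0]]`
is a quasi-basis for `E_X` and `Index E_X = 2`. -/
theorem linking_expectation_index_two
    {A X L : Type*} [NormedRing A] [StarRing A] [CStarRing A] [NormedAlgebra ℂ A]
    [StarModule ℂ A] [CompleteSpace A]
    [NormedAddCommGroup X] [NormedSpace ℂ X] [CompleteSpace X]
    [NormedRing L] [StarRing L] [CStarRing L] [NormedAlgebra ℂ L]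
    [StarModule ℂ L] [CompleteSpace L]
    (M : InvBimod A X)
    -- the linking algebra L of X: corner embeddings ι₁, ι₂ of A and j of X
    (ι₁ ι₂ : A →ₗ[ℂ] L) (j : X →ₗ[ℂ] L)
    (hι₁m : ∀ a b, ι₁ (a * b) = ι₁ a * ι₁ b)
    (hι₂m : ∀ a b, ι₂ (a * b) = ι₂ a * ι₂ b)
    (hι₁s : ∀ a, star (ι₁ a) = ι₁ (star a))
    (hι₂s : ∀ a, star (ι₂ a) = ι₂ (star a))
    (hι₁inj : Function.Injective ι₁) (hι₂inj : Function.Injective ι₂)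
    (hjinj : Function.Injective j)
    (horth : ∀ a b, ι₁ a * ι₂ b = 0)
    (horth' : ∀ a b, ι₂ a * ι₁ b = 0)
    (hone : ι₁ 1 + ι₂ 1 = 1)
    (hjl : ∀ a x, j (M.ls a x) = ι₁ a * j x)
    (hjr : ∀ a x, j (M.rs a x) = j x * ι₂ a)
    (hjj : ∀ x y, j x * star (j y) = ι₁ (M.linn x y))
    (hjj' : ∀ x y, star (j x) * j y = ι₂ (M.rinn x y))
    (hjz : ∀ x y, j x * j y = 0)
    (hj12 : ∀ a x, ι₂ a * j x = 0)
    (hj21 : ∀ a x, j x * ι₁ a = 0)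
    -- L is the linking algebra: every element decomposes as a 2×2 matrix
    (hgen : ∀ l : L, ∃ a b x y, l = ι₁ a + ι₂ b + j x + star (j y))
    (hdec : ∀ a b x y, ι₁ a + ι₂ b + j x + star (j y) = 0 →
      a = 0 ∧ b = 0 ∧ x = 0 ∧ y = 0)
    -- the conditional expectation E_X
    (EX : L →ₗ[ℂ] L)
    (hEX : ∀ a x, EX (ι₁ a + ι₂ a + j x + star (j (M.sh x))) = ι₁ a + ι₂ a)
    -- elements with Σ ⟨z_i, y_i⟩_A = 1, and w_i = z_i^♯
    {n : ℕ} (z y : Fin n → X) (hzy : ∑ i, M.rinn (z i) (y i) = 1)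
    (w : Fin n → X) (hw : ∀ i, w i = M.sh (z i))
    (W Y : Fin n → L)
    (hWdef : ∀ i, W i = j (w i) + star (j (M.sh (w i))))
    (hYdef : ∀ i, Y i = j (y i) + star (j (M.sh (y i)))) :
    -- quasi-basis property for E_X on B_X
    (∀ a x, (ι₁ a + ι₂ a + j x + star (j (M.sh x))) =
      EX (ι₁ a + ι₂ a + j x + star (j (M.sh x))) * 1 +
      ∑ i, EX ((ι₁ a + ι₂ a + j x + star (j (M.sh x))) * W i) * Y i) ∧
    (∀ a x, (ι₁ a + ι₂ a + j x + star (j (M.sh x))) =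
      1 * EX (ι₁ a + ι₂ a + j x + star (j (M.sh x))) +
      ∑ i, W i * EX (Y i * (ι₁ a + ι₂ a + j x + star (j (M.sh x))))) ∧
    -- Index E_X = 2
    (1 : L) * 1 + ∑ i, W i * Y i = 2 :=
  linking_expectation_index_two_general M ι₁ ι₂ j hι₁s hι₂s hone hjl hjr hjj hjj' hjz hj12 hj21 EX
    hEX z y hzy w hw W Y hWdef hYdef

end
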